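/- For an odd prime p and integers α, β with 0 ≤ α, β ≤ p-1, α + β ≥ p, and any integer s, the congruence ∑_{k=0}^{p-1} (-1)^k C(α,k) C(β,k) C(-1-α-β,k) ≡ ∑_{k=0}^{p-1} (-1)^k C(α,k) C(β+sp,k) C(-1-α-β-sp,k) (mod p^2) holds. -/
import Mathlib


/-- Generalized binomial coefficient `C(x,k) = x(x-1)⋯(x-k+1)/k!` for rational `x`. -/
def gbinom (x : ℚ) (k : ℕ) : ℚ := (∏ i ∈ Finset.range k, (x - i)) / (Nat.factorial k)

lemma gbinom_zero (x : ℚ) : gbinom x 0 = 1 := by simp [gbinom]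

lemma fact_ne (k : ℕ) : ((k.factorial : ℚ)) ≠ 0 := by exact_mod_cast Nat.factorial_ne_zero k

lemma gbinom_succ (x : ℚ) (k : ℕ) :
    gbinom x (k+1) = gbinom x k * (x - k) / (k+1) := by
  unfold gbinom
  rw [Finset.prod_range_succ, Nat.factorial_succ]
  rw [div_mul_eq_mul_div, div_div]
  congr 1
  push_cast
  ring

/-- `(k+1) · C(x, k+1) = x · C(x-1, k)` -/
lemma gbinom_succ' (x : ℚ) (k : ℕ) :
    ((k:ℚ)+1) * gbinom x (k+1) = x * gbinom (x-1) k := by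
  unfold gbinom
  rw [Finset.prod_range_succ', Nat.factorial_succ]
  have : ∀ i ∈ Finset.range k, x - ((i+1 : ℕ) : ℚ) = (x - 1) - i := by
    intro i _; push_cast; ring
  rw [Finset.prod_congr rfl this]
  have h2 := fact_ne k
  have h3 := fact_ne (k+1)
  rw [mul_comm x, mul_div_assoc, div_mul_eq_mul_div, mul_comm _ x, eq_div_iff h2]
  field_simp
  push_cast
  ring

/-- `x · C(x-1, k) = (x-k) · C(x, k)` -/
lemma gbinom_shift (x : ℚ) (k : ℕ) :
    x * gbinom (x-1) k = (x - k) * gbinom x k := by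
  have h1 := gbinom_succ' x k
  have h2 := gbinom_succ x k
  have h3 : ((k:ℚ)+1) ≠ 0 := by positivity
  rw [h2] at h1
  rw [← h1]
  field_simp

lemma gbinom_natCast (n k : ℕ) : gbinom (n:ℚ) k = (n.choose k : ℚ) := by
  induction k with
  | zero => simp [gbinom_zero]
  | succ k ih =>
    rw [gbinom_succ, ih]
    rcases le_or_gt (k+1) n with h | h
    · have hc := Nat.choose_succ_right_eq n k
      have hk : ((k:ℚ)+1) ≠ 0 := by positivity
      have hkn : k ≤ n := le_trans (Nat.le_succ k) h
      have hsub : ((n - k : ℕ) : ℚ) = (n:ℚ) - k := by push_cast [hkn]; ring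
      have hc' : (n.choose (k+1) : ℚ) * ((k:ℚ)+1) = (n.choose k : ℚ) * ((n:ℚ) - k) := by
        rw [← hsub]; exact_mod_cast congrArg (Nat.cast : ℕ → ℚ) hc
      field_simp
      linarith [hc']
    · rw [Nat.choose_eq_zero_of_lt h]
      rcases Nat.lt_succ_iff_lt_or_eq.mp h with h'' | h''
      · rw [Nat.choose_eq_zero_of_lt h'']; simp
      · subst h''; simp

lemma gbinom_reflect (x : ℚ) (k : ℕ) :
    gbinom x k = (-1)^k * gbinom ((k:ℚ) - 1 - x) k := by
  unfold gbinom
  rw [← Finset.prod_range_reflect (fun i => ((k:ℚ) - 1 - x - i)) k]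
  have h : ∀ i ∈ Finset.range k, ((k:ℚ) - 1 - x - ((k - 1 - i : ℕ):ℚ)) = -(x - i) := by
    intro i hi
    have hi' : i < k := Finset.mem_range.mp hi
    have : ((k - 1 - i : ℕ) : ℚ) = (k:ℚ) - 1 - i := by
      have : k - 1 - i = k - (1 + i) := by omega
      rw [this]
      have h1 : 1 + i ≤ k := by omega
      push_cast [h1]; ring
    rw [this]; ring
  rw [Finset.prod_congr rfl h]
  have : (∏ i ∈ Finset.range k, -(x - (i:ℚ))) = ∏ i ∈ Finset.range k, (-1) * (x - (i:ℚ)) := by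
    apply Finset.prod_congr rfl; intro i _; ring
  rw [this, Finset.prod_mul_distrib, Finset.prod_const, Finset.card_range,
    mul_div_assoc, ← mul_assoc, ← mul_pow]
  norm_num

def W (a : ℕ) (x : ℚ) (k : ℕ) : ℚ :=
  -(k:ℚ)^2 * (2*a+x+2) * (-1)^k * gbinom (a:ℚ) (k-1) * gbinom x k * gbinom (-1-(a:ℚ)-x) k

lemma gbinom_one (x : ℚ) : gbinom x 1 = x := by
  rw [show (1:ℕ) = 0+1 from rfl, gbinom_succ, gbinom_zero]; push_cast; ring

lemma wz (a : ℕ) (x : ℚ) (hx : (a:ℚ) + x + 1 ≠ 0) (k : ℕ) :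
    ((a:ℚ)+1)^2 * ((a:ℚ)+x+1) *
        ((-1:ℚ)^k * gbinom ((a:ℚ)+1) k * gbinom x k * gbinom (-1-((a:ℚ)+1)-x) k)
      - ((a:ℚ)+x+1)^3 * ((-1:ℚ)^k * gbinom (a:ℚ) k * gbinom x k * gbinom (-1-(a:ℚ)-x) k)
    = W a x (k+1) - W a x k := by
  have hX : (-1-(a:ℚ)-x) ≠ 0 := by intro h; apply hx; linarith
  match k with
  | 0 =>
    simp only [W]
    norm_num [gbinom_zero, gbinom_one]
    ring
  | (j+1) =>
    have hj1 : ((j:ℚ)+1) ≠ 0 := by positivity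
    have hj2 : ((j:ℚ)+1+1) ≠ 0 := by positivity
    have e6 : gbinom ((a:ℚ)+1) (j+1) = ((a:ℚ)+1) * gbinom ((a:ℚ)) j / ((j:ℚ)+1) := by
      rw [eq_div_iff hj1, mul_comm _ (((j:ℚ)+1)), gbinom_succ']
      norm_num
    have e7 : gbinom (-1-((a:ℚ)+1)-x) (j+1)
        = ((-1-(a:ℚ)-x) - ((j:ℚ)+1)) * gbinom (-1-(a:ℚ)-x) (j+1) / (-1-(a:ℚ)-x) := by
      rw [eq_div_iff hX]
      have := gbinom_shift (-1-(a:ℚ)-x) (j+1)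
      have harg : -1-((a:ℚ)+1)-x = (-1-(a:ℚ)-x) - 1 := by ring
      rw [harg]
      push_cast at this ⊢
      linarith [this]
    simp only [W, e6, e7, Nat.add_sub_cancel]
    rw [show j+1+1 = (j+1)+1 from rfl]
    rw [gbinom_succ x (j+1), gbinom_succ x j, gbinom_succ (-1-(a:ℚ)-x) (j+1),
      gbinom_succ (-1-(a:ℚ)-x) j, gbinom_succ (a:ℚ) j]
    push_cast
    rw [pow_succ ((-1:ℚ)) (j+1), pow_succ ((-1:ℚ)) j]
    field_simp
    ring

lemma PS (n : ℕ) : ∀ (a K : ℕ), a < K →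
    ∑ k ∈ Finset.range K, (-1:ℚ)^k * gbinom (a:ℚ) k * gbinom (n:ℚ) k * gbinom (-1-(a:ℚ)-(n:ℚ)) k
      = (((a+n).choose a : ℕ) : ℚ)^2 := by
  intro a
  induction a with
  | zero =>
    intro K hK
    rw [Finset.sum_eq_single_of_mem 0 (Finset.mem_range.mpr hK)]
    · simp [gbinom_zero]
    · intro k _ hk
      obtain ⟨j, rfl⟩ := Nat.exists_eq_succ_of_ne_zero hk
      rw [show ((0:ℕ):ℚ) = ((0:ℕ):ℚ) from rfl, gbinom_natCast]
      simp [Nat.choose_eq_zero_of_lt (Nat.succ_pos j)]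
  | succ a ih =>
    intro K hK
    have ha : a < K := Nat.lt_of_succ_lt hK
    set x : ℚ := (n:ℚ) with hxdef
    have hx : (a:ℚ) + x + 1 ≠ 0 := by positivity
    have tele := Finset.sum_range_sub (W a x) K
    have hW0 : W a x 0 = 0 := by simp [W]
    have hWK : W a x K = 0 := by
      have h1 : a < K - 1 := by omega
      simp [W, gbinom_natCast, Nat.choose_eq_zero_of_lt h1]
    have h1 : ∑ k ∈ Finset.range K,
        (((a:ℚ)+1)^2 * ((a:ℚ)+x+1) *
          ((-1:ℚ)^k * gbinom ((a:ℚ)+1) k * gbinom x k * gbinom (-1-((a:ℚ)+1)-x) k)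
        - ((a:ℚ)+x+1)^3 *
          ((-1:ℚ)^k * gbinom (a:ℚ) k * gbinom x k * gbinom (-1-(a:ℚ)-x) k)) = 0 := by
      rw [Finset.sum_congr rfl (fun k _ => wz a x hx k), tele, hWK, hW0, sub_zero]
    rw [Finset.sum_sub_distrib, ← Finset.mul_sum, ← Finset.mul_sum, sub_eq_zero] at h1
    have hIH := ih K ha
    rw [hIH] at h1
    have hc := Nat.add_one_mul_choose_eq (a+n) a
    -- (a+n+1) * (a+n).choose a = (a+n+1).choose (a+1) * (a+1)
    have hc' : ((a:ℚ)+x+1) * (((a+n).choose a : ℕ) : ℚ)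
        = (((a+n+1).choose (a+1) : ℕ) : ℚ) * ((a:ℚ)+1) := by
      have hc2 : (a+n+1) * ((a+n).choose a) = ((a+n+1).choose (a+1)) * (a+1) := by
        simpa [Nat.succ_eq_add_one] using hc
      rw [hxdef]
      exact_mod_cast hc2
    have hne1 : ((a:ℚ)+1) ≠ 0 := by positivity
    have hne2 : ((a:ℚ)+x+1) ≠ 0 := hx
    have goal' : ∑ k ∈ Finset.range K,
        (-1:ℚ)^k * gbinom ((a:ℚ)+1) k * gbinom x k * gbinom (-1-((a:ℚ)+1)-x) k
        = (((a+n+1).choose (a+1) : ℕ) : ℚ)^2 := by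
      have hmul : ((a:ℚ)+1)^2 * ((a:ℚ)+x+1) *
          (∑ k ∈ Finset.range K,
            (-1:ℚ)^k * gbinom ((a:ℚ)+1) k * gbinom x k * gbinom (-1-((a:ℚ)+1)-x) k)
          = ((a:ℚ)+1)^2 * ((a:ℚ)+x+1) * ((((a+n+1).choose (a+1) : ℕ) : ℚ)^2) := by
        rw [h1]
        have : ((a:ℚ)+x+1)^3 * (((a+n).choose a : ℕ) : ℚ)^2
            = ((a:ℚ)+x+1) * (((a:ℚ)+x+1) * (((a+n).choose a : ℕ) : ℚ))^2 := by ring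
        rw [this, hc']
        ring
      exact mul_left_cancel₀ (by positivity) hmul
    rw [show a+1+n = a+n+1 from by omega, ← goal']
    apply Finset.sum_congr rfl
    intro k _
    push_cast
    ring

noncomputable def gpoly (q : Polynomial ℚ) (k : ℕ) : Polynomial ℚ :=
  (∏ i ∈ Finset.range k, (q - Polynomial.C (i:ℚ))) * Polynomial.C (1 / (k.factorial : ℚ))

lemma gpoly_eval (q : Polynomial ℚ) (k : ℕ) (x : ℚ) :
    (gpoly q k).eval x = gbinom (q.eval x) k := by
  unfold gpoly gbinom
  rw [Polynomial.eval_mul, Polynomial.eval_prod, Polynomial.eval_C]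
  rw [mul_one_div]
  congr 1
  apply Finset.prod_congr rfl
  intro i _
  rw [Polynomial.eval_sub, Polynomial.eval_C]

lemma main_id (a K : ℕ) (hK : a < K) (x : ℚ) :
    ∑ k ∈ Finset.range K, (-1:ℚ)^k * gbinom (a:ℚ) k * gbinom x k * gbinom (-1-(a:ℚ)-x) k
      = (gbinom ((a:ℚ)+x) a)^2 := by
  set D : Polynomial ℚ :=
    (∑ k ∈ Finset.range K, Polynomial.C ((-1:ℚ)^k * gbinom (a:ℚ) k) * gpoly Polynomial.X k
        * gpoly (Polynomial.C (-1-(a:ℚ)) - Polynomial.X) k)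
      - (gpoly (Polynomial.C (a:ℚ) + Polynomial.X) a)^2 with hD
  have heval : ∀ y : ℚ, D.eval y
      = (∑ k ∈ Finset.range K, (-1:ℚ)^k * gbinom (a:ℚ) k * gbinom y k * gbinom (-1-(a:ℚ)-y) k)
        - (gbinom ((a:ℚ)+y) a)^2 := by
    intro y
    rw [hD, Polynomial.eval_sub, Polynomial.eval_finset_sum, Polynomial.eval_pow, gpoly_eval]
    rw [Polynomial.eval_add, Polynomial.eval_C, Polynomial.eval_X]
    congr 1
    apply Finset.sum_congr rfl
    intro k _
    simp only [Polynomial.eval_mul, Polynomial.eval_C, gpoly_eval, Polynomial.eval_X,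
      Polynomial.eval_sub]
  have hroot : ∀ n : ℕ, D.eval (n:ℚ) = 0 := by
    intro n
    rw [heval, PS n a K hK, sub_eq_zero]
    have h2 : (a:ℚ) + n = ((a+n : ℕ) : ℚ) := by push_cast; ring
    rw [h2, gbinom_natCast]
  have hDzero : D = 0 := by
    apply Polynomial.eq_zero_of_infinite_isRoot
    apply Set.infinite_of_injective_forall_mem (f := (Nat.cast : ℕ → ℚ)) Nat.cast_injective
    intro n
    exact hroot n
  have := heval x
  rw [hDzero] at this
  simp only [Polynomial.eval_zero] at this
  linarith [this]

lemma lucas_dvd {p : ℕ} (hp : p.Prime) (N k : ℕ) (hk : k < p) (hN : N % p < k) :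
    (p:ℤ) ∣ (N.choose k : ℤ) := by
  haveI : Fact p.Prime := ⟨hp⟩
  have h := Choose.choose_modEq_choose_mod_mul_choose_div (p := p) (n := N) (k := k)
  rw [Nat.mod_eq_of_lt hk, Nat.div_eq_of_lt hk, Nat.choose_eq_zero_of_lt hN] at h
  simpa using (Int.ModEq.dvd h)

lemma div_lemma (p α β : ℕ) (hp : p.Prime) (hα : α ≤ p - 1) (hβ : β ≤ p - 1)
    (hab : p ≤ α + β) (s : ℤ) :
    ∃ u : ℤ, gbinom ((α:ℚ) + ((β:ℚ) + s * p)) α = (p:ℚ) * (u:ℚ) := by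
  have hp2 : 2 ≤ p := hp.two_le
  have hαp : α < p := by omega
  have hβp : β < p := by omega
  set z : ℤ := (α:ℤ) + β + s * p with hz
  have harg : (α:ℚ) + ((β:ℚ) + s * p) = ((z:ℤ) : ℚ) := by push_cast [hz]; ring
  rw [harg]
  rcases le_or_gt 0 z with hz0 | hz0
  · -- z ≥ 0
    set N : ℕ := z.toNat with hNdef
    have hNz : (N:ℤ) = z := Int.toNat_of_nonneg hz0
    have hcast : ((z:ℤ):ℚ) = ((N:ℕ):ℚ) := by rw [← hNz]; push_cast; ring
    rw [hcast, gbinom_natCast]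
    rcases lt_or_ge N α with hNα | hNα
    · exact ⟨0, by rw [Nat.choose_eq_zero_of_lt hNα]; simp⟩
    · have hsub : ((α + β - p : ℕ) : ℤ) = (α:ℤ) + β - p := by
        rw [Nat.cast_sub hab]; push_cast; ring
      have hmod : N % p = α + β - p := by
        have h1 : (N:ℤ) ≡ ((α + β - p : ℕ) : ℤ) [ZMOD (p:ℤ)] :=
          Int.modEq_iff_dvd.mpr ⟨-(s+1), by rw [hsub, hNz, hz]; ring⟩
        have h2 : ((N % p : ℕ) : ℤ) = ((α + β - p : ℕ) : ℤ) := by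
          rw [Int.natCast_mod]
          calc (N:ℤ) % p = ((α + β - p : ℕ) : ℤ) % p := h1
            _ = ((α + β - p : ℕ) : ℤ) :=
                Int.emod_eq_of_lt (by positivity) (by exact_mod_cast (show (α + β - p : ℕ) < p by omega))
        exact_mod_cast h2
      obtain ⟨u, hu⟩ := lucas_dvd hp N α hαp (by rw [hmod]; omega)
      exact ⟨u, by exact_mod_cast congrArg (Int.cast : ℤ → ℚ) hu⟩
  · -- z < 0
    have hrefl := gbinom_reflect ((z:ℤ):ℚ) α
    set M : ℕ := ((α:ℤ) - 1 - z).toNat with hMdef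
    have hMz : (M:ℤ) = (α:ℤ) - 1 - z := Int.toNat_of_nonneg (by omega)
    have hcast : ((α:ℕ):ℚ) - 1 - ((z:ℤ):ℚ) = ((M:ℕ):ℚ) := by
      have h4 := congrArg (Int.cast : ℤ → ℚ) hMz
      push_cast at h4
      linarith
    rw [hcast, gbinom_natCast] at hrefl
    have hsub : ((p - 1 - β : ℕ) : ℤ) = (p:ℤ) - 1 - β := by
      rw [Nat.cast_sub (show β ≤ p - 1 by omega), Nat.cast_sub (show 1 ≤ p by omega)]
      push_cast; ring
    have hmod : M % p = p - 1 - β := by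
      have h1 : (M:ℤ) ≡ ((p - 1 - β : ℕ) : ℤ) [ZMOD (p:ℤ)] :=
        Int.modEq_iff_dvd.mpr ⟨s+1, by rw [hsub, hMz, hz]; ring⟩
      have h2 : ((M % p : ℕ) : ℤ) = ((p - 1 - β : ℕ) : ℤ) := by
        rw [Int.natCast_mod]
        calc (M:ℤ) % p = ((p - 1 - β : ℕ) : ℤ) % p := h1
          _ = ((p - 1 - β : ℕ) : ℤ) :=
              Int.emod_eq_of_lt (by positivity) (by exact_mod_cast (show (p - 1 - β : ℕ) < p by omega))
      exact_mod_cast h2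
    obtain ⟨u, hu⟩ := lucas_dvd hp M α hαp (by rw [hmod]; omega)
    refine ⟨(-1)^α * u, ?_⟩
    rw [hrefl]
    have h5 : ((M.choose α : ℕ) : ℚ) = (p:ℚ) * (u:ℚ) := by
      exact_mod_cast congrArg (Int.cast : ℤ → ℚ) hu
    rw [h5]
    push_cast
    ring

/-- Stability step: for an odd prime `p`, `0 ≤ α, β ≤ p-1` with `α + β ≥ p`, and any
integer `s`, `∑_{k=0}^{p-1} (-1)^k C(α,k) C(β,k) C(-1-α-β,k)
≡ ∑_{k=0}^{p-1} (-1)^k C(α,k) C(β+sp,k) C(-1-α-β-sp,k) (mod p²)`. -/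
theorem stability_step (p : ℕ) (hp : p.Prime) (hodd : Odd p)
    (α β : ℕ) (hα : α ≤ p - 1) (hβ : β ≤ p - 1) (hab : p ≤ α + β) (s : ℤ) :
    ∃ m : ℤ,
      ∑ k ∈ Finset.range p,
          (-1 : ℚ)^k * gbinom (α : ℚ) k * gbinom (β : ℚ) k * gbinom (-1 - (α : ℚ) - β) k
      = (∑ k ∈ Finset.range p,
          (-1 : ℚ)^k * gbinom (α : ℚ) k * gbinom ((β : ℚ) + s * p) k
            * gbinom (-1 - (α : ℚ) - β - s * p) k)
        + (p : ℚ)^2 * m := by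
  have hp2 : 2 ≤ p := hp.two_le
  have hαK : α < p := by omega
  have hL := main_id α p hαK (β:ℚ)
  have hR := main_id α p hαK ((β:ℚ) + s * p)
  obtain ⟨v, hv⟩ := div_lemma p α β hp hα hβ hab 0
  obtain ⟨u, hu⟩ := div_lemma p α β hp hα hβ hab s
  rw [show ((α:ℚ) + ((β:ℚ) + ((0:ℤ):ℚ) * p)) = ((α:ℚ) + (β:ℚ)) from by push_cast; ring] at hv
  refine ⟨v^2 - u^2, ?_⟩
  have hL' : ∑ k ∈ Finset.range p,
      (-1 : ℚ)^k * gbinom (α : ℚ) k * gbinom (β : ℚ) k * gbinom (-1 - (α : ℚ) - β) k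
      = ((p:ℚ) * v)^2 := by rw [hL, hv]
  have hR' : ∑ k ∈ Finset.range p,
      (-1 : ℚ)^k * gbinom (α : ℚ) k * gbinom ((β : ℚ) + s * p) k
        * gbinom (-1 - (α : ℚ) - β - s * p) k = ((p:ℚ) * u)^2 := by
    rw [← hu, ← hR]
    apply Finset.sum_congr rfl
    intro k _
    rw [show (-1 - (α:ℚ) - β - s * p) = (-1 - (α:ℚ) - ((β:ℚ) + s * p)) from by ring]
  rw [hL', hR']
  push_cast
  ring
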